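/- arXiv:1509.05168 — 2 statements merged into one kernel-verified Lean document; each statement's English description precedes it below -/
import Mathlib

section
/- Let (K, L, c) be a feasibility problem where K = K^{n_1} × … × K^{n_m} is an extended second order cone, L ⊆ ℝ^n a linear subspace, c ∈ ℝ^n. Suppose there is a nonzero a ∈ K ∩ L such that H₁(a) ∪ H₂(a) ≠ ∅, and let K̃ be the relaxed cone obtained from K and a. Then (K, L, c) is in weak status if and only if (K̃, L, c) is in weak status. -/
open scoped RealInnerProductSpace Pointwise
open Classical

noncomputable section

/-- The Lorentz (second order) cone `SOC^{k+1} = {x = (x₀, x̄) : ‖x̄‖ ≤ x₀} ⊆ ℝ^{k+1}`. -/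
def SOC (k : ℕ) : Set (EuclideanSpace ℝ (Fin (k + 1))) :=
  {x | Real.sqrt (∑ j : Fin k, x j.succ ^ 2) ≤ x 0}

/-- The reflection `x' = (x₀, -x̄)` of `x` with respect to the Lorentz cone. -/
def reflect {k : ℕ} (x : EuclideanSpace ℝ (Fin (k + 1))) : EuclideanSpace ℝ (Fin (k + 1)) :=
  WithLp.toLp 2 (fun j => if j = 0 then x 0 else - x j)

/-- The closed half-space `H_d = {x : dᵀx ≥ 0}`. -/
def halfSpace {k : ℕ} (d : EuclideanSpace ℝ (Fin (k + 1))) :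
    Set (EuclideanSpace ℝ (Fin (k + 1))) :=
  {x | 0 ≤ ⟪d, x⟫}

/-- The ray `ray_d = {α • d : α ≥ 0}`. -/
def ray {k : ℕ} (d : EuclideanSpace ℝ (Fin (k + 1))) :
    Set (EuclideanSpace ℝ (Fin (k + 1))) :=
  {x | ∃ α : ℝ, 0 ≤ α ∧ x = α • d}

/-- A block of an extended second order cone: the trivial cone `{0}`, the whole space,
the Lorentz cone, a closed half-space `H_d` with `d ∈ SOC \ {0}`, or a ray `ray_d` with
`d ∈ SOC`. -/
def IsESOCBlock {k : ℕ} (B : Set (EuclideanSpace ℝ (Fin (k + 1)))) : Prop :=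
  B = {0} ∨ B = Set.univ ∨ B = SOC k ∨
    (∃ d ∈ SOC k, d ≠ 0 ∧ B = halfSpace d) ∨ ∃ d ∈ SOC k, B = ray d

/-- The total space `ℝ^n = ℝ^{n_1} × ⋯ × ℝ^{n_m}` with the Euclidean (ℓ²) structure. -/
abbrev TS {m : ℕ} (k : Fin m → ℕ) := PiLp 2 fun i => EuclideanSpace ℝ (Fin (k i + 1))

/-- The product cone `K = K^{n_1} × ⋯ × K^{n_m}` determined by the blocks `B i`. -/
def prodSet {m : ℕ} (k : Fin m → ℕ) (B : ∀ i, Set (EuclideanSpace ℝ (Fin (k i + 1)))) :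
    Set (TS k) :=
  {x | ∀ i, x i ∈ B i}

/-- `B` describes an extended second order cone (blockwise). -/
def IsESOC {m : ℕ} (k : Fin m → ℕ) (B : ∀ i, Set (EuclideanSpace ℝ (Fin (k i + 1)))) : Prop :=
  ∀ i, IsESOCBlock (B i)

/-- `H₁(a, K) = {i : K^{n_i} = SOC^{n_i}, a_{n_i} ∈ ri SOC^{n_i}}`. -/
def H1 {m : ℕ} (k : Fin m → ℕ) (B : ∀ i, Set (EuclideanSpace ℝ (Fin (k i + 1))))
    (a : TS k) : Set (Fin m) :=
  {i | B i = SOC (k i) ∧ a i ∈ intrinsicInterior ℝ (SOC (k i))}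

/-- `H₂(a, K) = {i : K^{n_i} = SOC^{n_i}, a_{n_i} ∈ (rel bd SOC^{n_i}) \ {0}}`. -/
def H2 {m : ℕ} (k : Fin m → ℕ) (B : ∀ i, Set (EuclideanSpace ℝ (Fin (k i + 1))))
    (a : TS k) : Set (Fin m) :=
  {i | B i = SOC (k i) ∧ a i ∈ intrinsicFrontier ℝ (SOC (k i)) ∧ a i ≠ 0}

/-- The relaxed cone `K̃` obtained from `K` and `a` (blockwise): block `i` becomes the whole
space if `i ∈ H₁(a, K)`, the half-space `H_{(a_{n_i})'}` if `i ∈ H₂(a, K)`, and is unchanged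
otherwise. -/
def relaxedBlocks {m : ℕ} (k : Fin m → ℕ) (B : ∀ i, Set (EuclideanSpace ℝ (Fin (k i + 1))))
    (a : TS k) : ∀ i, Set (EuclideanSpace ℝ (Fin (k i + 1))) :=
  fun i =>
    if i ∈ H1 k B a then Set.univ
    else if i ∈ H2 k B a then halfSpace (reflect (a i))
    else B i

/-- The affine set `L + c`. -/
def affineSet {V : Type*} [AddCommGroup V] [Module ℝ V] (L : Submodule ℝ V) (c : V) :
    Set V :=
  {x | x - c ∈ L}

/-- The distance between two sets. -/
def setDist {V : Type*} [NormedAddCommGroup V] (A B : Set V) : ℝ :=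
  sInf (Set.image2 dist A B)

/-- `(K, L, c)` is strongly feasible: `(L + c) ∩ ri K ≠ ∅`. -/
def StronglyFeasible {V : Type*} [NormedAddCommGroup V] [Module ℝ V]
    (K : Set V) (L : Submodule ℝ V) (c : V) : Prop :=
  (affineSet L c ∩ intrinsicInterior ℝ K).Nonempty

/-- `(K, L, c)` is weakly feasible: `K ∩ (L + c) ≠ ∅` but `(L + c) ∩ ri K = ∅`. -/
def WeaklyFeasible {V : Type*} [NormedAddCommGroup V] [Module ℝ V]
    (K : Set V) (L : Submodule ℝ V) (c : V) : Prop :=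
  (K ∩ affineSet L c).Nonempty ∧ affineSet L c ∩ intrinsicInterior ℝ K = ∅

/-- `(K, L, c)` is weakly infeasible: `K ∩ (L + c) = ∅` but `dist(K, L + c) = 0`. -/
def WeaklyInfeasible {V : Type*} [NormedAddCommGroup V] [Module ℝ V]
    (K : Set V) (L : Submodule ℝ V) (c : V) : Prop :=
  K ∩ affineSet L c = ∅ ∧ setDist K (affineSet L c) = 0

/-- `(K, L, c)` is strongly infeasible: `K ∩ (L + c) = ∅` and `dist(K, L + c) > 0`. -/
def StronglyInfeasible {V : Type*} [NormedAddCommGroup V] [Module ℝ V]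
    (K : Set V) (L : Submodule ℝ V) (c : V) : Prop :=
  K ∩ affineSet L c = ∅ ∧ 0 < setDist K (affineSet L c)

/-- `(K, L, c)` is in weak status: weakly feasible or weakly infeasible. -/
def WeakStatus {V : Type*} [NormedAddCommGroup V] [Module ℝ V]
    (K : Set V) (L : Submodule ℝ V) (c : V) : Prop :=
  WeaklyFeasible K L c ∨ WeaklyInfeasible K L c

/-!
All blocks of `K` and of `K̃` are convex cones and `K ⊆ K̃`. Weak status means: not strongly
feasible, and at distance zero from `L + c`. Translating along `a ∈ L` preserves `L + c` and,
for large `t`, carries every `x ∈ ri K̃` to `x + t a ∈ ri K`: on an `H₁` block because `aᵢ` is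
interior to the Lorentz cone; on an `H₂` block because the Lorentz cone is
`{y : y₀ ≥ 0, q(y) ≥ 0}` with `q(y) = ⟪y', y⟫`, and `q(x + t a) ≥ q(x) + 2 t ⟪a', x⟫` where
`⟪a', x⟫ > 0`; on the other blocks because `ri C + C ⊆ ri C` for a convex cone `C`. So
`(K, L, c)` and `(K̃, L, c)` are strongly feasible together, and since `ri K̃` is dense in `K̃`,
both cones have the same distance to `L + c`.
-/

open Filter Topology

section IntrinsicInterior

variable {V : Type*} [NormedAddCommGroup V] [NormedSpace ℝ V]

theorem mem_intrinsicInterior_iff_eventually {s : Set V} {x : V} :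
    x ∈ intrinsicInterior ℝ s ↔
      x ∈ affineSpan ℝ s ∧ ∀ᶠ y in 𝓝 x, y ∈ affineSpan ℝ s → y ∈ s := by
  constructor
  · rintro ⟨y, hy, rfl⟩
    rw [mem_interior_iff_mem_nhds, nhds_subtype, mem_comap'] at hy
    exact ⟨y.2, by filter_upwards [hy] with z hz hzs using hz (x := ⟨z, hzs⟩) rfl⟩
  · rintro ⟨hx, h⟩
    refine ⟨⟨x, hx⟩, ?_, rfl⟩
    rw [mem_interior_iff_mem_nhds, nhds_subtype, mem_comap']
    filter_upwards [h] with z hz w hw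
    subst hw
    exact hz w.2

theorem mem_intrinsicInterior_iff_eventually_of_zero_mem {s : Set V} (h0 : (0 : V) ∈ s)
    {x : V} : x ∈ intrinsicInterior ℝ s ↔
      x ∈ Submodule.span ℝ s ∧ ∀ᶠ y in 𝓝 x, y ∈ Submodule.span ℝ s → y ∈ s := by
  have hspan : ∀ y, y ∈ affineSpan ℝ s ↔ y ∈ Submodule.span ℝ s := fun y => by
    rw [← SetLike.mem_coe, ← SetLike.mem_coe, ← affineSpan_insert_zero, Set.insert_eq_of_mem h0]
  simp only [mem_intrinsicInterior_iff_eventually, hspan]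

theorem intrinsicInterior_eq_interior_of_nonempty_interior {s : Set V}
    (h : (interior s).Nonempty) : intrinsicInterior ℝ s = interior s := by
  have htop : affineSpan ℝ s = ⊤ :=
    top_unique ((isOpen_interior.affineSpan_eq_top h).symm.trans_le
      (affineSpan_mono ℝ interior_subset))
  ext x
  simp only [mem_intrinsicInterior_iff_eventually, htop, AffineSubspace.mem_top, true_imp_iff,
    true_and, mem_interior_iff_mem_nhds]
  rfl

theorem intrinsicInterior_univ : intrinsicInterior ℝ (Set.univ : Set V) = Set.univ := by
  rw [intrinsicInterior_eq_interior_of_nonempty_interior (by simp), interior_univ]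

end IntrinsicInterior

structure IsPointedCone {V : Type*} [AddCommMonoid V] [Module ℝ V] (C : Set V) : Prop where
  zero_mem : (0 : V) ∈ C
  add_mem : ∀ ⦃u⦄, u ∈ C → ∀ ⦃v⦄, v ∈ C → u + v ∈ C
  smul_mem : ∀ ⦃t : ℝ⦄, 0 ≤ t → ∀ ⦃u⦄, u ∈ C → t • u ∈ C

namespace IsPointedCone

section Module

variable {V : Type*} [AddCommMonoid V] [Module ℝ V] {C : Set V}

theorem univ : IsPointedCone (Set.univ : Set V) :=
  ⟨trivial, fun _ _ _ _ => trivial, fun _ _ _ _ => trivial⟩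

theorem singleton_zero : IsPointedCone ({0} : Set V) where
  zero_mem := rfl
  add_mem := by rintro _ rfl _ rfl; exact add_zero _
  smul_mem := by rintro t - _ rfl; exact smul_zero t

theorem convex (hC : IsPointedCone C) : Convex ℝ C :=
  fun _ hu _ hv _ _ ha hb _ => hC.add_mem (hC.smul_mem ha hu) (hC.smul_mem hb hv)

end Module

variable {V : Type*} [NormedAddCommGroup V] [NormedSpace ℝ V] {C : Set V}

theorem add_mem_intrinsicInterior (hC : IsPointedCone C) {x a : V}
    (hx : x ∈ intrinsicInterior ℝ C) (ha : a ∈ C) : x + a ∈ intrinsicInterior ℝ C := by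
  rw [mem_intrinsicInterior_iff_eventually_of_zero_mem hC.zero_mem] at hx ⊢
  obtain ⟨hx, hev⟩ := hx
  have haspan : a ∈ Submodule.span ℝ C := Submodule.subset_span ha
  have hsub : Tendsto (· - a) (𝓝 (x + a)) (𝓝 x) := by
    simpa using (continuous_sub_right a).tendsto (x + a)
  refine ⟨Submodule.add_mem _ hx haspan, ?_⟩
  filter_upwards [hsub.eventually hev] with y hy hyspan
  simpa using hC.add_mem (hy (Submodule.sub_mem _ hyspan haspan)) ha

theorem smul_mem_intrinsicInterior (hC : IsPointedCone C) {x : V}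
    (hx : x ∈ intrinsicInterior ℝ C) {t : ℝ} (ht : 0 < t) : t • x ∈ intrinsicInterior ℝ C := by
  rw [mem_intrinsicInterior_iff_eventually_of_zero_mem hC.zero_mem] at hx ⊢
  obtain ⟨hx, hev⟩ := hx
  have hinv : Tendsto (t⁻¹ • ·) (𝓝 (t • x)) (𝓝 x) := by
    simpa [inv_smul_smul₀ ht.ne'] using (continuous_const_smul t⁻¹).tendsto (t • x)
  refine ⟨Submodule.smul_mem _ t hx, ?_⟩
  filter_upwards [hinv.eventually hev] with y hy hyspan
  simpa [smul_inv_smul₀ ht.ne'] using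
    hC.smul_mem ht.le (hy (Submodule.smul_mem _ t⁻¹ hyspan))

theorem subset_closure_intrinsicInterior [FiniteDimensional ℝ V] (hC : IsPointedCone C) :
    C ⊆ closure (intrinsicInterior ℝ C) := by
  intro u hu
  obtain ⟨y, hy⟩ := Set.Nonempty.intrinsicInterior hC.convex ⟨u, hu⟩
  have hlim : Tendsto (fun η : ℝ => η • y + u) (𝓝[>] 0) (𝓝 u) := by
    have : Tendsto (fun η : ℝ => η • y + u) (𝓝 0) (𝓝 ((0 : ℝ) • y + u)) :=
      ((continuous_id.smul continuous_const).add continuous_const).tendsto 0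
    rw [zero_smul, zero_add] at this
    exact this.mono_left nhdsWithin_le_nhds
  refine mem_closure_of_tendsto hlim ?_
  filter_upwards [self_mem_nhdsWithin] with η hη
  exact hC.add_mem_intrinsicInterior (hC.smul_mem_intrinsicInterior hy hη) hu

theorem eventually_add_smul_mem_interior (hC : IsPointedCone C) {a : V}
    (ha : a ∈ interior C) (x : V) : ∀ᶠ t : ℝ in atTop, x + t • a ∈ interior C := by
  have hlim : Tendsto (fun t : ℝ => t⁻¹ • x + a) atTop (𝓝 a) := by
    simpa using ((tendsto_inv_atTop_zero (𝕜 := ℝ)).smul_const x).add_const a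
  filter_upwards [hlim.eventually (isOpen_interior.mem_nhds ha), eventually_gt_atTop 0]
    with t hint ht
  have hscale : t • interior C ⊆ interior C := by
    rw [← interior_smul₀ ht.ne']
    exact interior_mono (Set.smul_set_subset_iff.2 fun u hu => hC.smul_mem ht.le hu)
  have := hscale (Set.smul_mem_smul_set hint)
  rwa [smul_add, smul_inv_smul₀ ht.ne'] at this

end IsPointedCone

section SetDist

variable {W : Type*} [NormedAddCommGroup W] {A A' C : Set W}

theorem setDist_nonneg : 0 ≤ setDist A C :=
  Real.sInf_nonneg <| Set.forall_mem_image2.2 fun _ _ _ _ => dist_nonneg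

theorem setDist_le_dist {p q : W} (hp : p ∈ A) (hq : q ∈ C) : setDist A C ≤ dist p q :=
  csInf_le ⟨0, Set.forall_mem_image2.2 fun _ _ _ _ => dist_nonneg⟩ (Set.mem_image2_of_mem hp hq)

theorem setDist_le_setDist_of_subset (h : A ⊆ A') (hA : A.Nonempty) (hC : C.Nonempty) :
    setDist A' C ≤ setDist A C :=
  csInf_le_csInf ⟨0, Set.forall_mem_image2.2 fun _ _ _ _ => dist_nonneg⟩ (hA.image2 hC)
    (Set.image2_subset h subset_rfl)

theorem setDist_le_setDist_of_forall_exists (hA' : A'.Nonempty) (hC : C.Nonempty)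
    (h : ∀ u ∈ A', ∀ v ∈ C, ∀ ε > 0, ∃ p ∈ A, ∃ q ∈ C, dist p q ≤ dist u v + ε) :
    setDist A C ≤ setDist A' C := by
  refine le_csInf (hA'.image2 hC) (Set.forall_mem_image2.2 fun u hu v hv => ?_)
  refine le_of_forall_pos_le_add fun ε hε => ?_
  obtain ⟨p, hp, q, hq, hpq⟩ := h u hu v hv ε hε
  exact (setDist_le_dist hp hq).trans hpq

end SetDist

section Feasibility

variable {W : Type*} [NormedAddCommGroup W] [Module ℝ W] {K K' : Set W}
  {L : Submodule ℝ W} {c a : W}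

theorem self_mem_affineSet : c ∈ affineSet L c := by
  simp [affineSet]

theorem add_smul_mem_affineSet {x : W} (hx : x ∈ affineSet L c) (ha : a ∈ L) (t : ℝ) :
    x + t • a ∈ affineSet L c := by
  simpa [affineSet, add_sub_right_comm] using L.add_mem hx (L.smul_mem t ha)

theorem weakStatus_iff_not_stronglyFeasible_and_setDist_eq_zero :
    WeakStatus K L c ↔ ¬ StronglyFeasible K L c ∧ setDist K (affineSet L c) = 0 := by
  constructor
  · rintro (⟨⟨x, hxK, hxA⟩, hri⟩ | ⟨hempty, hdist⟩)
    · refine ⟨Set.not_nonempty_iff_eq_empty.2 hri, le_antisymm ?_ setDist_nonneg⟩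
      simpa using setDist_le_dist hxK hxA
    · refine ⟨fun ⟨x, hxA, hxri⟩ => ?_, hdist⟩
      exact (Set.eq_empty_iff_forall_notMem.1 hempty) x ⟨intrinsicInterior_subset hxri, hxA⟩
  · rintro ⟨hnsf, hdist⟩
    rcases (K ∩ affineSet L c).eq_empty_or_nonempty with hempty | hne
    · exact Or.inr ⟨hempty, hdist⟩
    · exact Or.inl ⟨hne, Set.not_nonempty_iff_eq_empty.1 hnsf⟩

end Feasibility

structure IsRelaxation {E : Type*} [NormedAddCommGroup E] [Module ℝ E]
    (K K' : Set E) (a : E) : Prop where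
  subset : K ⊆ K'
  intrinsicInterior_mono : intrinsicInterior ℝ K ⊆ intrinsicInterior ℝ K'
  eventually_add_smul_mem : ∀ x ∈ intrinsicInterior ℝ K',
    ∀ᶠ t : ℝ in atTop, x + t • a ∈ intrinsicInterior ℝ K

theorem IsRelaxation.of_isPointedCone {E : Type*} [NormedAddCommGroup E] [NormedSpace ℝ E]
    {K : Set E} {a : E} (hK : IsPointedCone K) (ha : a ∈ K) : IsRelaxation K K a where
  subset := subset_rfl
  intrinsicInterior_mono := subset_rfl
  eventually_add_smul_mem _ hx := by
    filter_upwards [eventually_ge_atTop 0] with t ht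
    exact hK.add_mem_intrinsicInterior hx (hK.smul_mem ht ha)

namespace IsRelaxation

variable {W : Type*} [NormedAddCommGroup W] [Module ℝ W] {K K' : Set W}
  {L : Submodule ℝ W} {c a : W}

theorem stronglyFeasible_iff (h : IsRelaxation K K' a) (ha : a ∈ L) :
    StronglyFeasible K L c ↔ StronglyFeasible K' L c := by
  constructor
  · rintro ⟨x, hxA, hx⟩
    exact ⟨x, hxA, h.intrinsicInterior_mono hx⟩
  · rintro ⟨x, hxA, hx⟩
    obtain ⟨t, ht⟩ := (h.eventually_add_smul_mem x hx).exists
    exact ⟨x + t • a, add_smul_mem_affineSet hxA ha t, ht⟩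

theorem setDist_eq (h : IsRelaxation K K' a) (ha : a ∈ L) (hK : K.Nonempty)
    (hdense : K' ⊆ closure (intrinsicInterior ℝ K')) :
    setDist K (affineSet L c) = setDist K' (affineSet L c) := by
  refine le_antisymm (setDist_le_setDist_of_forall_exists (hK.mono h.subset)
    ⟨c, self_mem_affineSet⟩ fun u hu v hv ε hε => ?_)
    (setDist_le_setDist_of_subset h.subset hK ⟨c, self_mem_affineSet⟩)
  obtain ⟨u', hu', huu'⟩ := Metric.mem_closure_iff.1 (hdense hu) ε hε
  obtain ⟨t, ht⟩ := (h.eventually_add_smul_mem u' hu').exists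
  refine ⟨u' + t • a, intrinsicInterior_subset ht, v + t • a,
    add_smul_mem_affineSet hv ha t, ?_⟩
  calc dist (u' + t • a) (v + t • a) = dist u' v := dist_add_right _ _ _
    _ ≤ dist u' u + dist u v := dist_triangle _ _ _
    _ ≤ dist u v + ε := by rw [dist_comm] at huu'; linarith

theorem weakStatus_iff (h : IsRelaxation K K' a) (ha : a ∈ L) (hK : K.Nonempty)
    (hdense : K' ⊆ closure (intrinsicInterior ℝ K')) :
    WeakStatus K L c ↔ WeakStatus K' L c := by
  rw [weakStatus_iff_not_stronglyFeasible_and_setDist_eq_zero,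
    weakStatus_iff_not_stronglyFeasible_and_setDist_eq_zero, h.stronglyFeasible_iff ha,
    h.setDist_eq ha hK hdense]

end IsRelaxation

section Lorentz

variable {n : ℕ}

theorem reflect_apply (x : EuclideanSpace ℝ (Fin (n + 1))) (j : Fin (n + 1)) :
    reflect x j = if j = 0 then x 0 else -x j := rfl

theorem reflect_add (x y : EuclideanSpace ℝ (Fin (n + 1))) :
    reflect (x + y) = reflect x + reflect y := by
  ext j; by_cases hj : j = 0 <;> simp [reflect_apply, hj, add_comm]

theorem reflect_smul (t : ℝ) (x : EuclideanSpace ℝ (Fin (n + 1))) :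
    reflect (t • x) = t • reflect x := by
  ext j; by_cases hj : j = 0 <;> simp [reflect_apply, hj]

theorem continuous_reflect : Continuous (reflect : EuclideanSpace ℝ (Fin (n + 1)) → _) :=
  (IsLinearMap.mk reflect_add reflect_smul).mk'.continuous_of_finiteDimensional

theorem reflect_reflect (x : EuclideanSpace ℝ (Fin (n + 1))) : reflect (reflect x) = x := by
  ext j; by_cases hj : j = 0 <;> simp [reflect_apply, hj]

theorem reflect_ne_zero {x : EuclideanSpace ℝ (Fin (n + 1))} (hx : x ≠ 0) : reflect x ≠ 0 := by
  intro h
  apply hx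
  rw [← reflect_reflect x, h]
  ext j
  simp [reflect_apply]

theorem inner_reflect_left (x y : EuclideanSpace ℝ (Fin (n + 1))) :
    ⟪reflect x, y⟫ = x 0 * y 0 - ∑ j : Fin n, x j.succ * y j.succ := by
  simp [PiLp.inner_apply, Fin.sum_univ_succ, reflect_apply, Fin.succ_ne_zero, mul_comm,
    sub_eq_add_neg]

theorem inner_reflect_comm (x y : EuclideanSpace ℝ (Fin (n + 1))) :
    ⟪reflect x, y⟫ = ⟪reflect y, x⟫ := by
  simp only [inner_reflect_left, mul_comm]

theorem mem_SOC_iff {x : EuclideanSpace ℝ (Fin (n + 1))} :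
    x ∈ SOC n ↔ 0 ≤ x 0 ∧ ∑ j : Fin n, x j.succ ^ 2 ≤ x 0 ^ 2 :=
  Real.sqrt_le_iff

theorem mem_SOC_iff_inner {x : EuclideanSpace ℝ (Fin (n + 1))} :
    x ∈ SOC n ↔ 0 ≤ x 0 ∧ 0 ≤ ⟪reflect x, x⟫ := by
  simp only [mem_SOC_iff, inner_reflect_left, sub_nonneg, sq]

theorem inner_reflect_nonneg {d x : EuclideanSpace ℝ (Fin (n + 1))} (hd : d ∈ SOC n)
    (hx : x ∈ SOC n) : 0 ≤ ⟪reflect d, x⟫ := by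
  rw [inner_reflect_left, sub_nonneg]
  calc ∑ j : Fin n, d j.succ * x j.succ
      ≤ √(∑ j : Fin n, d j.succ ^ 2) * √(∑ j : Fin n, x j.succ ^ 2) :=
        Real.sum_mul_le_sqrt_mul_sqrt _ _ _
    _ ≤ d 0 * x 0 := mul_le_mul hd hx (Real.sqrt_nonneg _) ((Real.sqrt_nonneg _).trans hd)

theorem isPointedCone_SOC : IsPointedCone (SOC n) where
  zero_mem := by simp [mem_SOC_iff]
  add_mem x hx y hy := by
    have hxy := inner_reflect_nonneg hx hy
    rw [mem_SOC_iff_inner] at hx hy ⊢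
    refine ⟨add_nonneg hx.1 hy.1, ?_⟩
    rw [reflect_add, inner_add_left, inner_add_right, inner_add_right, inner_reflect_comm y x]
    linarith [hx.2, hy.2]
  smul_mem t ht x hx := by
    rw [mem_SOC_iff_inner] at hx ⊢
    rw [reflect_smul, real_inner_smul_left, real_inner_smul_right, PiLp.smul_apply, smul_eq_mul]
    exact ⟨mul_nonneg ht hx.1, mul_nonneg ht (mul_nonneg ht hx.2)⟩

theorem pos_of_mem_SOC {x : EuclideanSpace ℝ (Fin (n + 1))} (hx : x ∈ SOC n) (hx0 : x ≠ 0) :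
    0 < x 0 := by
  rw [mem_SOC_iff] at hx
  refine hx.1.lt_of_ne fun h0 => hx0 ?_
  have htail : ∀ j : Fin n, x j.succ = 0 := fun j => by
    have := (Finset.sum_eq_zero_iff_of_nonneg fun j _ => sq_nonneg (x j.succ)).1
      (le_antisymm (by simpa [← h0] using hx.2) (by positivity)) j (Finset.mem_univ j)
    exact pow_eq_zero_iff two_ne_zero |>.1 this
  ext j
  exact Fin.cases h0.symm htail j

theorem mem_interior_SOC {x : EuclideanSpace ℝ (Fin (n + 1))} (h0 : 0 < x 0)
    (hq : 0 < ⟪reflect x, x⟫) : x ∈ interior (SOC n) := by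
  have hopen : IsOpen ({y : EuclideanSpace ℝ (Fin (n + 1)) | 0 < y 0} ∩
      {y | 0 < ⟪reflect y, y⟫}) :=
    (isOpen_lt continuous_const (PiLp.continuous_apply 2 _ 0)).inter
      (isOpen_lt continuous_const (continuous_reflect.inner continuous_id))
  exact interior_maximal (fun y hy => mem_SOC_iff_inner.2 ⟨hy.1.le, hy.2.le⟩) hopen ⟨h0, hq⟩

theorem intrinsicInterior_SOC : intrinsicInterior ℝ (SOC n) = interior (SOC n) :=
  intrinsicInterior_eq_interior_of_nonempty_interior
    ⟨EuclideanSpace.single 0 1, mem_interior_SOC (by simp) (by simp [inner_reflect_left])⟩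

theorem eventually_add_smul_mem_interior_SOC {a x : EuclideanSpace ℝ (Fin (n + 1))}
    (ha : a ∈ SOC n) (ha0 : 0 < a 0) (hx : 0 < ⟪reflect a, x⟫) :
    ∀ᶠ t : ℝ in atTop, x + t • a ∈ interior (SOC n) := by
  have hlin : ∀ {α β : ℝ}, 0 < β → ∀ᶠ t : ℝ in atTop, 0 < α + β * t := fun hβ =>
    (tendsto_atTop_add_const_left _ _ (tendsto_id.const_mul_atTop hβ)).eventually_gt_atTop 0
  have hq : 0 ≤ ⟪reflect a, a⟫ := inner_reflect_nonneg ha ha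
  filter_upwards [hlin (α := x 0) ha0, hlin (α := ⟪reflect x, x⟫) (mul_pos two_pos hx),
    eventually_ge_atTop 0] with t h0 hquad ht
  refine mem_interior_SOC ?_ ?_
  · simp only [PiLp.add_apply, PiLp.smul_apply, smul_eq_mul]
    linarith
  · have hexp : ⟪reflect (x + t • a), x + t • a⟫
        = ⟪reflect x, x⟫ + 2 * ⟪reflect a, x⟫ * t + t * t * ⟪reflect a, a⟫ := by
      rw [reflect_add, reflect_smul, inner_add_left, inner_add_right, inner_add_right,
        real_inner_smul_left, real_inner_smul_left, real_inner_smul_right, real_inner_smul_right,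
        inner_reflect_comm x a]
      ring
    rw [hexp]
    nlinarith [mul_nonneg (mul_nonneg ht ht) hq]

end Lorentz

section Blocks

variable {n : ℕ}

theorem isPointedCone_halfSpace (d : EuclideanSpace ℝ (Fin (n + 1))) :
    IsPointedCone (halfSpace d) where
  zero_mem := by simp [halfSpace]
  add_mem u hu v hv := by
    simp only [halfSpace, Set.mem_ofPred_eq, inner_add_right] at *
    linarith
  smul_mem t ht u hu := by
    simp only [halfSpace, Set.mem_ofPred_eq, real_inner_smul_right] at *
    positivity

theorem inner_pos_of_mem_interior_halfSpace {d x : EuclideanSpace ℝ (Fin (n + 1))} (hd : d ≠ 0)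
    (hx : x ∈ interior (halfSpace d)) : 0 < ⟪d, x⟫ := by
  have hlim : Tendsto (fun ε : ℝ => x - ε • d) (𝓝[>] 0) (𝓝 x) := by
    have : Tendsto (fun ε : ℝ => x - ε • d) (𝓝 0) (𝓝 (x - (0 : ℝ) • d)) :=
      (continuous_const.sub (continuous_id.smul continuous_const)).tendsto 0
    rw [zero_smul, sub_zero] at this
    exact this.mono_left nhdsWithin_le_nhds
  obtain ⟨ε, hεd, hε⟩ :=
    ((hlim.eventually (mem_interior_iff_mem_nhds.1 hx)).and self_mem_nhdsWithin).exists
  have hdd : 0 < ⟪d, d⟫ := real_inner_self_pos.2 hd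
  have : 0 ≤ ⟪d, x⟫ - ε * ⟪d, d⟫ := by
    simpa [halfSpace, inner_sub_right, real_inner_smul_right] using hεd
  nlinarith [mul_pos (Set.mem_Ioi.1 hε) hdd]

theorem intrinsicInterior_halfSpace {d : EuclideanSpace ℝ (Fin (n + 1))} (hd : d ≠ 0) :
    intrinsicInterior ℝ (halfSpace d) = interior (halfSpace d) := by
  refine intrinsicInterior_eq_interior_of_nonempty_interior ⟨d, ?_⟩
  have hopen : IsOpen {y : EuclideanSpace ℝ (Fin (n + 1)) | 0 < ⟪d, y⟫} :=
    isOpen_lt continuous_const (continuous_const.inner continuous_id)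
  have hsub : {y : EuclideanSpace ℝ (Fin (n + 1)) | 0 < ⟪d, y⟫} ⊆ halfSpace d :=
    fun _ hy => Set.mem_ofPred.1 hy |>.le
  exact interior_maximal hsub hopen (real_inner_self_pos.2 hd)

theorem isPointedCone_ray (d : EuclideanSpace ℝ (Fin (n + 1))) : IsPointedCone (ray d) where
  zero_mem := ⟨0, le_rfl, (zero_smul ℝ d).symm⟩
  add_mem := by
    rintro _ ⟨α, hα, rfl⟩ _ ⟨β, hβ, rfl⟩
    exact ⟨α + β, add_nonneg hα hβ, (add_smul α β d).symm⟩
  smul_mem := by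
    rintro t ht _ ⟨α, hα, rfl⟩
    exact ⟨t * α, mul_nonneg ht hα, (mul_smul t α d).symm⟩

theorem IsESOCBlock.isPointedCone {B : Set (EuclideanSpace ℝ (Fin (n + 1)))}
    (h : IsESOCBlock B) : IsPointedCone B := by
  rcases h with rfl | rfl | rfl | ⟨d, -, -, rfl⟩ | ⟨d, -, rfl⟩
  · exact IsPointedCone.singleton_zero
  · exact IsPointedCone.univ
  · exact isPointedCone_SOC
  · exact isPointedCone_halfSpace d
  · exact isPointedCone_ray d

end Blocks

section Product

variable {m : ℕ} {k : Fin m → ℕ} {B : ∀ i, Set (EuclideanSpace ℝ (Fin (k i + 1)))}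

theorem isPointedCone_prodSet (hB : ∀ i, IsPointedCone (B i)) : IsPointedCone (prodSet k B) where
  zero_mem i := (hB i).zero_mem
  add_mem _ hu _ hv i := (hB i).add_mem (hu i) (hv i)
  smul_mem _ ht _ hu i := (hB i).smul_mem ht (hu i)

def TS.singleₗ (k : Fin m → ℕ) (i : Fin m) : EuclideanSpace ℝ (Fin (k i + 1)) →ₗ[ℝ] TS k :=
  (WithLp.linearEquiv 2 ℝ (∀ j, EuclideanSpace ℝ (Fin (k j + 1)))).symm.toLinearMap ∘ₗ
    LinearMap.single ℝ (fun j => EuclideanSpace ℝ (Fin (k j + 1))) i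

theorem TS.singleₗ_apply (i : Fin m) (z : EuclideanSpace ℝ (Fin (k i + 1))) :
    TS.singleₗ k i z = PiLp.single 2 i z := rfl

theorem mem_span_prodSet_iff (h0 : ∀ i, (0 : EuclideanSpace ℝ (Fin (k i + 1))) ∈ B i)
    {x : TS k} : x ∈ Submodule.span ℝ (prodSet k B) ↔ ∀ i, x i ∈ Submodule.span ℝ (B i) := by
  constructor
  · intro hx i
    refine Submodule.span_mono ?_ (Submodule.apply_mem_span_image_of_mem_span
      (PiLp.proj 2 (𝕜 := ℝ) _ i).toLinearMap hx)
    rintro _ ⟨y, hy, rfl⟩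
    exact hy i
  · intro hx
    have hsum : ∑ i, TS.singleₗ k i (x i) = x := by
      ext j
      simp [TS.singleₗ_apply]
    rw [← hsum]
    refine Submodule.sum_mem _ fun i _ => Submodule.span_mono ?_
      (Submodule.apply_mem_span_image_of_mem_span (TS.singleₗ k i) (hx i))
    rintro _ ⟨b, hb, rfl⟩ j
    by_cases hj : j = i
    · subst hj; simpa [TS.singleₗ_apply] using hb
    · simpa [TS.singleₗ_apply, hj] using h0 j

theorem mem_intrinsicInterior_prodSet_iff
    (h0 : ∀ i, (0 : EuclideanSpace ℝ (Fin (k i + 1))) ∈ B i) {x : TS k} :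
    x ∈ intrinsicInterior ℝ (prodSet k B) ↔ ∀ i, x i ∈ intrinsicInterior ℝ (B i) := by
  simp only [mem_intrinsicInterior_iff_eventually_of_zero_mem (h0 _),
    mem_intrinsicInterior_iff_eventually_of_zero_mem (show (0 : TS k) ∈ prodSet k B from h0),
    mem_span_prodSet_iff h0]
  constructor
  · rintro ⟨hspan, hev⟩ i
    refine ⟨hspan i, ?_⟩
    let φ : EuclideanSpace ℝ (Fin (k i + 1)) → TS k := fun z => x + TS.singleₗ k i (z - x i)
    have hφ : Tendsto φ (𝓝 (x i)) (𝓝 x) :=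
      (continuous_const.add ((TS.singleₗ k i).continuous_of_finiteDimensional.comp
        (continuous_id.sub continuous_const))).tendsto' _ _ (by simp)
    have hφi : ∀ z, φ z i = z := fun z => by simp [φ, TS.singleₗ_apply]
    have hφj : ∀ z, ∀ j ≠ i, φ z j = x j := fun z j hj => by simp [φ, TS.singleₗ_apply, hj]
    filter_upwards [hφ.eventually hev] with z hz hzspan
    refine hφi z ▸ hz (fun j => ?_) i
    by_cases hj : j = i
    · subst hj; rwa [hφi]
    · rw [hφj z j hj]; exact hspan j
  · intro h
    refine ⟨fun i => (h i).1, ?_⟩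
    filter_upwards [eventually_all.2 fun i =>
      ((PiLp.continuous_apply 2 _ i).tendsto x).eventually (h i).2] with y hy hyspan i
    exact hy i (hyspan i)

end Product

section Relaxation

variable {n : ℕ}

theorem isRelaxation_SOC_univ {a : EuclideanSpace ℝ (Fin (n + 1))}
    (ha : a ∈ intrinsicInterior ℝ (SOC n)) : IsRelaxation (SOC n) Set.univ a where
  subset := Set.subset_univ _
  intrinsicInterior_mono := by
    rw [intrinsicInterior_univ]
    exact Set.subset_univ _
  eventually_add_smul_mem x _ := by
    rw [intrinsicInterior_SOC] at ha ⊢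
    exact isPointedCone_SOC.eventually_add_smul_mem_interior ha x

theorem isRelaxation_SOC_halfSpace {a : EuclideanSpace ℝ (Fin (n + 1))} (ha : a ∈ SOC n)
    (ha0 : a ≠ 0) : IsRelaxation (SOC n) (halfSpace (reflect a)) a where
  subset _ hx := inner_reflect_nonneg ha hx
  intrinsicInterior_mono := by
    rw [intrinsicInterior_SOC, intrinsicInterior_halfSpace (reflect_ne_zero ha0)]
    exact interior_mono fun _ hx => inner_reflect_nonneg ha hx
  eventually_add_smul_mem x hx := by
    rw [intrinsicInterior_halfSpace (reflect_ne_zero ha0)] at hx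
    rw [intrinsicInterior_SOC]
    exact eventually_add_smul_mem_interior_SOC ha (pos_of_mem_SOC ha ha0)
      (inner_pos_of_mem_interior_halfSpace (reflect_ne_zero ha0) hx)

variable {m : ℕ} {k : Fin m → ℕ} {B B' : ∀ i, Set (EuclideanSpace ℝ (Fin (k i + 1)))} {a : TS k}

theorem IsRelaxation.prodSet (h : ∀ i, IsRelaxation (B i) (B' i) (a i))
    (h0 : ∀ i, (0 : EuclideanSpace ℝ (Fin (k i + 1))) ∈ B i)
    (h0' : ∀ i, (0 : EuclideanSpace ℝ (Fin (k i + 1))) ∈ B' i) :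
    IsRelaxation (prodSet k B) (prodSet k B') a where
  subset _ hx i := (h i).subset (hx i)
  intrinsicInterior_mono x hx := by
    rw [mem_intrinsicInterior_prodSet_iff h0] at hx
    rw [mem_intrinsicInterior_prodSet_iff h0']
    exact fun i => (h i).intrinsicInterior_mono (hx i)
  eventually_add_smul_mem x hx := by
    rw [mem_intrinsicInterior_prodSet_iff h0'] at hx
    filter_upwards [eventually_all.2 fun i => (h i).eventually_add_smul_mem _ (hx i)] with t ht
    exact (mem_intrinsicInterior_prodSet_iff h0).2 ht

theorem isPointedCone_relaxedBlocks (hB : IsESOC k B) (i : Fin m) :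
    IsPointedCone (relaxedBlocks k B a i) := by
  unfold relaxedBlocks
  split_ifs
  · exact IsPointedCone.univ
  · exact isPointedCone_halfSpace _
  · exact (hB i).isPointedCone

theorem isRelaxation_relaxedBlocks (hB : IsESOC k B) (haK : a ∈ prodSet k B) (i : Fin m) :
    IsRelaxation (B i) (relaxedBlocks k B a i) (a i) := by
  unfold relaxedBlocks
  split_ifs with h1 h2
  · rw [h1.1]
    exact isRelaxation_SOC_univ h1.2
  · rw [h2.1]
    exact isRelaxation_SOC_halfSpace (h2.1 ▸ haK i) h2.2.2
  · exact .of_isPointedCone (hB i).isPointedCone (haK i)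

end Relaxation

theorem relaxation_weak_status_iff_general {m : ℕ} (k : Fin m → ℕ)
    (B : ∀ i, Set (EuclideanSpace ℝ (Fin (k i + 1)))) (hB : IsESOC k B)
    (L : Submodule ℝ (TS k)) (c : TS k) (a : TS k)
    (haK : a ∈ prodSet k B) (haL : a ∈ L) :
    WeakStatus (prodSet k B) L c ↔
      WeakStatus (prodSet k (relaxedBlocks k B a)) L c := by
  have hrelaxed : IsPointedCone (prodSet k (relaxedBlocks k B a)) :=
    isPointedCone_prodSet (isPointedCone_relaxedBlocks hB)
  have hrelax : IsRelaxation (prodSet k B) (prodSet k (relaxedBlocks k B a)) a :=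
    .prodSet (isRelaxation_relaxedBlocks hB haK) (fun i => (hB i).isPointedCone.zero_mem)
      (fun i => (isPointedCone_relaxedBlocks hB i).zero_mem)
  exact hrelax.weakStatus_iff haL ⟨a, haK⟩ hrelaxed.subset_closure_intrinsicInterior

/-- **Theorem 1(ii).** Let `(K, L, c)` be a feasibility problem where
`K = K^{n_1} × ⋯ × K^{n_m}` is an extended second order cone, `L` a linear subspace and
`c` a point.  Suppose there is a nonzero `a ∈ K ∩ L` with `H₁(a) ∪ H₂(a) ≠ ∅` and let `K̃`
be the relaxed cone obtained from `K` and `a`.  Then `(K, L, c)` is in weak status if and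
only if `(K̃, L, c)` is in weak status. -/
theorem relaxation_weak_status_iff {m : ℕ} (k : Fin m → ℕ)
    (B : ∀ i, Set (EuclideanSpace ℝ (Fin (k i + 1)))) (hB : IsESOC k B)
    (L : Submodule ℝ (TS k)) (c : TS k) (a : TS k)
    (haK : a ∈ prodSet k B) (haL : a ∈ L) (ha0 : a ≠ 0)
    (hH : (H1 k B a ∪ H2 k B a).Nonempty) :
    WeakStatus (prodSet k B) L c ↔
      WeakStatus (prodSet k (relaxedBlocks k B a)) L c :=
  relaxation_weak_status_iff_general k B hB L c a haK haL
end
end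

section
/- Let K ⊆ ℝ^n be an extended second order cone, A : ℝ^n → ℝ^m a linear map with adjoint A^T, b ∈ ℝ^m, c ∈ ℝ^n, and suppose the problem (D): sup{b^T y : c − A^T y ∈ K} is strongly feasible, i.e., there exists y with c − A^T y ∈ ri K. Let L = (range A^T) ∩ {A^T y : b^T y = 0} and let K_γ be the cone of the last problem of a maximal relaxation sequence for (K, L, c). Then there exists y with c − A^T y ∈ ri K_γ; that is, the relaxed problem (D'): sup{b^T y : c − A^T y ∈ K_γ} has a relative-interior feasible solution. -/
open scoped RealInnerProductSpace Pointwise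
open Classical

noncomputable section

/-- A relaxation sequence for `(K, L, c)`: a finite sequence of cones `K₁, …, K_γ` (given
blockwise; `blocks t` is `K_{t+1}` for `t < γ`, the point `c` plays no role in the data)
with `K₁ = K`, each `K_t` an extended second order cone, and for each step there exists
`d ∈ K_t ∩ L` such that `K_{t+1}` is the relaxed cone obtained from `K_t` and `d`, with
`K_t` strictly contained in `K_{t+1}`. -/
structure RelaxSeq {m : ℕ} (k : Fin m → ℕ) (B : ∀ i, Set (EuclideanSpace ℝ (Fin (k i + 1))))
    (L : Submodule ℝ (TS k)) where
  /-- the length `γ` of the sequence -/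
  gamma : ℕ
  gamma_pos : 0 < gamma
  /-- the cones of the sequence, given blockwise -/
  blocks : ℕ → ∀ i, Set (EuclideanSpace ℝ (Fin (k i + 1)))
  first : blocks 0 = B
  esoc : ∀ t, t < gamma → IsESOC k (blocks t)
  step : ∀ t, t + 1 < gamma → ∃ d : TS k, d ∈ prodSet k (blocks t) ∧ d ∈ L ∧
    blocks (t + 1) = relaxedBlocks k (blocks t) d ∧
    prodSet k (blocks t) ⊂ prodSet k (blocks (t + 1))

/-- The blocks of the cone `K_γ` of the last problem of a relaxation sequence. -/
def RelaxSeq.lastBlocks {m : ℕ} {k : Fin m → ℕ}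
    {B : ∀ i, Set (EuclideanSpace ℝ (Fin (k i + 1)))} {L : Submodule ℝ (TS k)}
    (S : RelaxSeq k B L) : ∀ i, Set (EuclideanSpace ℝ (Fin (k i + 1))) :=
  S.blocks (S.gamma - 1)

/-- A relaxation sequence is maximal if the last problem admits no non-trivial relaxation,
i.e. every `d ∈ K_γ ∩ L` has `H₁(d, K_γ) ∪ H₂(d, K_γ) = ∅`. -/
def RelaxSeq.Maximal {m : ℕ} {k : Fin m → ℕ}
    {B : ∀ i, Set (EuclideanSpace ℝ (Fin (k i + 1)))} {L : Submodule ℝ (TS k)}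
    (S : RelaxSeq k B L) : Prop :=
  ∀ d : TS k, d ∈ prodSet k S.lastBlocks → d ∈ L →
    H1 k S.lastBlocks d ∪ H2 k S.lastBlocks d = ∅

/-- The subspace `L = (range Aᵀ) ∩ {Aᵀ y : bᵀ y = 0}`. -/
def dualL {m p : ℕ} (k : Fin m → ℕ) (A : TS k →ₗ[ℝ] EuclideanSpace ℝ (Fin p))
    (b : EuclideanSpace ℝ (Fin p)) : Submodule ℝ (TS k) :=
  LinearMap.range (LinearMap.adjoint A) ⊓
    Submodule.map (LinearMap.adjoint A) (LinearMap.ker (innerSL ℝ b).toLinearMap)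

/-!
The same `y` works. The relative interior of a product is the
product of the relative interiors, so it suffices to follow a single Lorentz block through one
relaxation step. It becomes either the whole space or a half-space `H_{d'}` with `d ∈ SOC`;
by Cauchy–Schwarz `SOC ⊆ H_{d'}`, and since `SOC` has nonempty interior,
`ri SOC = int SOC ⊆ int H_{d'} ⊆ ri H_{d'}`.
-/

open Set Filter Topology

section IntrinsicInterior

variable {𝕜 : Type*} [Ring 𝕜]

theorem mem_intrinsicInterior_iff_mem_nhdsWithin {V P : Type*} [AddCommGroup V] [Module 𝕜 V]
    [TopologicalSpace P] [AddTorsor V P] {s : Set P} {x : P} :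
    x ∈ intrinsicInterior 𝕜 s ↔ x ∈ affineSpan 𝕜 s ∧ s ∈ 𝓝[affineSpan 𝕜 s] x := by
  simp only [mem_intrinsicInterior, mem_interior_iff_mem_nhds]
  constructor
  · rintro ⟨y, hy, rfl⟩
    exact ⟨y.2, preimage_coe_mem_nhds_subtype.1 hy⟩
  · rintro ⟨hx, hs⟩
    exact ⟨⟨x, hx⟩, preimage_coe_mem_nhds_subtype.2 hs, rfl⟩

theorem intrinsicInterior_eq_interior_of_affineSpan_eq_top {V P : Type*} [AddCommGroup V]
    [Module 𝕜 V] [TopologicalSpace P] [AddTorsor V P] {s : Set P} (hs : affineSpan 𝕜 s = ⊤) :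
    intrinsicInterior 𝕜 s = interior s := by
  ext x
  rw [mem_intrinsicInterior_iff_mem_nhdsWithin, hs, AffineSubspace.top_coe, nhdsWithin_univ,
    mem_interior_iff_mem_nhds]
  exact and_iff_right (AffineSubspace.mem_top 𝕜 V x)

variable {ι : Type*} [Fintype ι] {E : ι → Type*} [∀ i, AddCommGroup (E i)] [∀ i, Module 𝕜 (E i)]

theorem coe_affineSpan_univ_pi {s : ∀ i, Set (E i)} (hs : ∀ i, (s i).Nonempty) :
    (affineSpan 𝕜 (univ.pi s) : Set (∀ i, E i)) = univ.pi fun i => affineSpan 𝕜 (s i) := by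
  classical
  ext x
  constructor
  · intro hx i _
    have hmap :=
      AffineSubspace.mem_map_of_mem (LinearMap.proj (R := 𝕜) (φ := E) i).toAffineMap hx
    rw [AffineSubspace.map_span] at hmap
    exact affineSpan_mono 𝕜 eval_image_univ_pi_subset hmap
  · intro hx
    choose w hw using hs
    have hw' : w ∈ univ.pi s := fun i _ => hw i
    have hsingle : ∀ i, Submodule.map (LinearMap.single 𝕜 E i) (vectorSpan 𝕜 (s i)) ≤
        vectorSpan 𝕜 (univ.pi s) := by
      intro i
      rw [vectorSpan_def, Submodule.map_span_le]
      rintro _ ⟨b, hb, b', hb', rfl⟩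
      have hupd : ∀ {a}, a ∈ s i → Function.update w i a ∈ univ.pi s := fun ha =>
        update_mem_pi_iff_of_mem hw' |>.2 fun _ => ha
      convert vsub_mem_vectorSpan 𝕜 (hupd hb) (hupd hb') using 1
      ext j
      rcases eq_or_ne j i with rfl | hj <;> simp [*]
    rw [SetLike.mem_coe,
      ← AffineSubspace.vsub_right_mem_direction_iff_mem (subset_affineSpan 𝕜 _ hw'),
      direction_affineSpan, ← Finset.univ_sum_single (x -ᵥ w)]
    refine Submodule.sum_mem _ fun i _ => hsingle i ⟨x i - w i, ?_, rfl⟩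
    rw [← direction_affineSpan]
    exact AffineSubspace.vsub_mem_direction (hx i trivial) (subset_affineSpan 𝕜 _ (hw i))

variable [∀ i, TopologicalSpace (E i)]

theorem intrinsicInterior_univ_pi (s : ∀ i, Set (E i)) :
    intrinsicInterior 𝕜 (univ.pi s) = univ.pi fun i => intrinsicInterior 𝕜 (s i) := by
  by_cases hs : ∀ i, (s i).Nonempty
  · ext x
    simp only [mem_intrinsicInterior_iff_mem_nhdsWithin, Set.mem_pi, mem_univ, true_imp_iff]
    rw [← SetLike.mem_coe, coe_affineSpan_univ_pi hs, nhdsWithin_pi_univ_eq]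
    simp only [Set.mem_pi, mem_univ, true_imp_iff, SetLike.mem_coe]
    refine ⟨fun ⟨hx, hmem⟩ i => ⟨hx i, ?_⟩, fun h => ⟨fun i => (h i).1, ?_⟩⟩
    · have : ∀ i, NeBot (𝓝[affineSpan 𝕜 (s i)] x i) := fun i =>
        mem_closure_iff_nhdsWithin_neBot.1 (subset_closure (hx i))
      exact (Filter.pi_mem_pi_iff finite_univ).1 hmem i trivial
    · exact Filter.pi_mem_pi finite_univ fun i _ => (h i).2
  · push Not at hs
    obtain ⟨i, hi⟩ := hs
    rw [univ_pi_eq_empty hi, intrinsicInterior_empty, eq_comm,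
      univ_pi_eq_empty (i := i) (by rw [hi, intrinsicInterior_empty])]

end IntrinsicInterior

theorem mem_intrinsicInterior_prodSet {m : ℕ} {k : Fin m → ℕ}
    {B : ∀ i, Set (EuclideanSpace ℝ (Fin (k i + 1)))} {x : TS k} :
    x ∈ intrinsicInterior ℝ (prodSet k B) ↔ ∀ i, x i ∈ intrinsicInterior ℝ (B i) := by
  let e := (PiLp.continuousLinearEquiv 2 ℝ fun i => EuclideanSpace ℝ (Fin (k i + 1)))
    |>.toContinuousAffineEquiv
  have hprod : prodSet k B = e.symm '' univ.pi B := by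
    ext y
    simp [prodSet, e]
  rw [hprod, ContinuousAffineEquiv.intrinsicInterior_image, intrinsicInterior_univ_pi]
  simp [e]

section SOC

variable {K : ℕ}

theorem inner_reflect (d x : EuclideanSpace ℝ (Fin (K + 1))) :
    ⟪reflect d, x⟫ = d 0 * x 0 - ∑ j : Fin K, d j.succ * x j.succ := by
  simp [PiLp.inner_apply, Fin.sum_univ_succ, reflect, Fin.succ_ne_zero, mul_comm, sub_eq_add_neg]

theorem SOC_subset_halfSpace_reflect {d : EuclideanSpace ℝ (Fin (K + 1))} (hd : d ∈ SOC K) :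
    SOC K ⊆ halfSpace (reflect d) := by
  intro x hx
  have hCS := Real.sum_mul_le_sqrt_mul_sqrt Finset.univ (fun j : Fin K => d j.succ)
    (fun j => x j.succ)
  have := mul_le_mul hd hx (Real.sqrt_nonneg _) ((Real.sqrt_nonneg _).trans hd)
  simp only [halfSpace, mem_ofPred_eq, inner_reflect]
  linarith

theorem affineSpan_SOC : affineSpan ℝ (SOC K) = ⊤ := by
  let U := {x : EuclideanSpace ℝ (Fin (K + 1)) | Real.sqrt (∑ j : Fin K, x j.succ ^ 2) < x 0}
  have hU : IsOpen U := isOpen_lt (by fun_prop) (by fun_prop)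
  have hUne : U.Nonempty := ⟨EuclideanSpace.single 0 1, by simp [U, Fin.succ_ne_zero]⟩
  have hUsub : U ⊆ SOC K := fun x hx => by
    simp only [U, SOC, mem_ofPred_eq] at hx ⊢
    exact hx.le
  exact top_unique (hU.affineSpan_eq_top hUne ▸ affineSpan_mono ℝ hUsub)

theorem intrinsicInterior_SOC_subset {t : Set (EuclideanSpace ℝ (Fin (K + 1)))}
    (ht : SOC K ⊆ t) : intrinsicInterior ℝ (SOC K) ⊆ intrinsicInterior ℝ t := by
  rw [intrinsicInterior_eq_interior_of_affineSpan_eq_top affineSpan_SOC]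
  exact (interior_mono ht).trans interior_subset_intrinsicInterior

end SOC

section Relaxation

variable {m : ℕ} {k : Fin m → ℕ} {B : ∀ i, Set (EuclideanSpace ℝ (Fin (k i + 1)))}

theorem mem_intrinsicInterior_relaxedBlocks {d x : TS k} (hd : d ∈ prodSet k B)
    (hx : ∀ i, x i ∈ intrinsicInterior ℝ (B i)) (i : Fin m) :
    x i ∈ intrinsicInterior ℝ (relaxedBlocks k B d i) := by
  unfold relaxedBlocks
  split_ifs with h₁ h₂
  · exact interior_subset_intrinsicInterior (by simp)
  · have hB : B i = SOC (k i) := h₂.1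
    have hdi : d i ∈ SOC (k i) := hB ▸ hd i
    exact intrinsicInterior_SOC_subset (SOC_subset_halfSpace_reflect hdi) (hB ▸ hx i)
  · exact hx i

theorem RelaxSeq.mem_intrinsicInterior_blocks {L : Submodule ℝ (TS k)} (S : RelaxSeq k B L)
    {x : TS k} (hx : x ∈ intrinsicInterior ℝ (prodSet k B)) {t : ℕ} (ht : t < S.gamma) :
    x ∈ intrinsicInterior ℝ (prodSet k (S.blocks t)) := by
  induction t with
  | zero => rwa [S.first]
  | succ t ih =>
    obtain ⟨d, hd, -, hrelax, -⟩ := S.step t ht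
    rw [hrelax, mem_intrinsicInterior_prodSet]
    exact mem_intrinsicInterior_relaxedBlocks hd
      (mem_intrinsicInterior_prodSet.1 (ih (Nat.lt_of_succ_lt ht)))

theorem RelaxSeq.mem_intrinsicInterior_lastBlocks {L : Submodule ℝ (TS k)}
    (S : RelaxSeq k B L) {x : TS k} (hx : x ∈ intrinsicInterior ℝ (prodSet k B)) :
    x ∈ intrinsicInterior ℝ (prodSet k S.lastBlocks) :=
  S.mem_intrinsicInterior_blocks hx (Nat.sub_one_lt_of_lt S.gamma_pos)

end Relaxation

theorem relaxed_dual_strongly_feasible_general {m p : ℕ} (k : Fin m → ℕ)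
    (B : ∀ i, Set (EuclideanSpace ℝ (Fin (k i + 1))))
    (A : TS k →ₗ[ℝ] EuclideanSpace ℝ (Fin p)) (b : EuclideanSpace ℝ (Fin p)) (c : TS k)
    (hsf : ∃ y, c - LinearMap.adjoint A y ∈ intrinsicInterior ℝ (prodSet k B))
    (S : RelaxSeq k B (dualL k A b)) :
    ∃ y, c - LinearMap.adjoint A y ∈ intrinsicInterior ℝ (prodSet k S.lastBlocks) :=
  hsf.imp fun _ => S.mem_intrinsicInterior_lastBlocks

/-- **Theorem (regularization for attainment), item (i).**
Let `K ⊆ ℝ^n` be an extended second order cone, `A : ℝ^n → ℝ^p` a linear map with adjoint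
`Aᵀ`, `b ∈ ℝ^p`, `c ∈ ℝ^n`, and suppose the problem `(D) : sup {bᵀy : c - Aᵀy ∈ K}` is
strongly feasible, i.e. there is `y` with `c - Aᵀy ∈ ri K`.  Let
`L = (range Aᵀ) ∩ {Aᵀy : bᵀy = 0}` and let `K_γ` be the cone of the last problem of a
maximal relaxation sequence for `(K, L, c)`.  Then there exists `y` with
`c - Aᵀy ∈ ri K_γ`, i.e. the relaxed problem `(D')` has a relative-interior feasible
solution. -/
theorem relaxed_dual_strongly_feasible {m p : ℕ} (k : Fin m → ℕ)
    (B : ∀ i, Set (EuclideanSpace ℝ (Fin (k i + 1)))) (hB : IsESOC k B)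
    (A : TS k →ₗ[ℝ] EuclideanSpace ℝ (Fin p)) (b : EuclideanSpace ℝ (Fin p)) (c : TS k)
    (hsf : ∃ y, c - LinearMap.adjoint A y ∈ intrinsicInterior ℝ (prodSet k B))
    (S : RelaxSeq k B (dualL k A b)) (hmax : S.Maximal) :
    ∃ y, c - LinearMap.adjoint A y ∈ intrinsicInterior ℝ (prodSet k S.lastBlocks) :=
  relaxed_dual_strongly_feasible_general k B A b c hsf S

end
end
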